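/- If λ < λ₀ then for an attractive potential, G_λ(0) = Σ_{γ: 0→0} exp(−Φ(γ) − λ|γ|) = ∞, and consequently G_λ(x) = ∞ for every x ∈ ℤ^d, since G_λ(x) ≥ H_λ(x) G_λ(0) where H_λ(x) > 0 is the contribution of paths from 0 to x stopped upon first arrival at x. -/

import Mathlib

open Finset Filter
open scoped ENNReal

/-- A step of the nearest-neighbor walk on `ℤ^d`: a coordinate direction and a sign. -/
def step (d : ℕ) (s : Fin d × Bool) : Fin d → ℤ :=
  fun j => if j = s.1 then (if s.2 then 1 else -1) else 0

/-- Position after `k` steps of the path encoded by the step sequence `ω` (starting at `0`). -/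
def pathPos {d n : ℕ} (ω : Fin n → Fin d × Bool) (k : ℕ) : Fin d → ℤ :=
  ∑ i ∈ Finset.range k, if h : i < n then step d (ω ⟨i, h⟩) else 0

/-- Local time of the path at the vertex `x`: number of indices `0 ≤ k ≤ n` with `γ(k) = x`. -/
def locTime {d n : ℕ} (ω : Fin n → Fin d × Bool) (x : Fin d → ℤ) : ℕ :=
  ((Finset.range (n + 1)).filter fun k => pathPos ω k = x).card

/-- Internal energy `Φ(γ) = ∑_x φ(ℓ_x(γ))` (only visited vertices contribute when `φ 0 = 0`). -/
noncomputable def energy {d n : ℕ} (φ : ℕ → ℝ) (ω : Fin n → Fin d × Bool) : ℝ :=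
  ∑ x ∈ (Finset.range (n + 1)).image (pathPos ω), φ (locTime ω x)

/-- Partition function of length-`n` nearest-neighbor paths on `ℤ^d` starting at the origin. -/
noncomputable def Zpart (d : ℕ) (φ : ℕ → ℝ) (n : ℕ) : ℝ :=
  ∑ ω : Fin n → Fin d × Bool, Real.exp (-(energy φ ω))


/-- Two-point function with values in `ℝ≥0∞`, allowing it to be infinite:
`G_λ(x) = ∑_{γ:0→x} exp(−Φ(γ) − λ|γ|)`. -/
noncomputable def Gtop (d : ℕ) (φ : ℕ → ℝ) (lam : ℝ) (x : Fin d → ℤ) : ℝ≥0∞ :=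
  ∑' n : ℕ, ∑ ω : Fin n → Fin d × Bool,
    if pathPos ω n = x then ENNReal.ofReal (Real.exp (-(energy φ ω) - lam * n)) else 0

/-!
Write `W_n(y)` (`Gterm`) for the weight of the length-`n` paths from `0` to `y`, so that
`G_λ(y) = ∑ₙ W_n(y)`. For an attractive potential the occupation numbers of a concatenation are
at most the sums of those of the pieces, so `Φ(γ₁ ∐ γ₂) ≤ Φ(γ₁) + Φ(γ₂)` and `W` is
supermultiplicative: `W_n(x) W_m(y) ≤ W_{n+m}(x + y)`. Reversing paths gives `W_n(-y) = W_n(y)`.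
Since `∑_y W_n(y) = e^{-λn} Z_n` over the `(2n+1)^d` points of `[-n, n]^d`, some `y` has
`W_n(y) ≥ e^{-λn} Z_n / (2n+1)^d`, which grows exponentially for `λ < λ₀`. Hence
`W_{2n}(0) ≥ W_n(y) W_n(-y) → ∞`, and `W_{2n+m}(x) ≥ W_{2n}(0) W_m(x) → ∞` for any `m` with
`W_m(x) > 0`.
-/

section Paths

variable {d n m : ℕ}

@[simp]
lemma pathPos_zero (ω : Fin n → Fin d × Bool) : pathPos ω 0 = 0 := by
  simp [pathPos]

lemma pathPos_succ (ω : Fin n → Fin d × Bool) (k : ℕ) :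
    pathPos ω (k + 1) = pathPos ω k + if h : k < n then step d (ω ⟨k, h⟩) else 0 := by
  simp [pathPos, sum_range_succ]

lemma pathPos_append_of_le (ω₁ : Fin n → Fin d × Bool) (ω₂ : Fin m → Fin d × Bool)
    {k : ℕ} (hk : k ≤ n) : pathPos (Fin.append ω₁ ω₂) k = pathPos ω₁ k := by
  refine sum_congr rfl fun i hi => ?_
  have hin : i < n := (mem_range.1 hi).trans_le hk
  rw [dif_pos hin, dif_pos (by omega)]
  exact congrArg (step d) (Fin.append_left ω₁ ω₂ ⟨i, hin⟩)

lemma pathPos_append_add (ω₁ : Fin n → Fin d × Bool) (ω₂ : Fin m → Fin d × Bool)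
    {j : ℕ} (hj : j ≤ m) :
    pathPos (Fin.append ω₁ ω₂) (n + j) = pathPos ω₁ n + pathPos ω₂ j := by
  induction j with
  | zero => simp [pathPos_append_of_le ω₁ ω₂ le_rfl]
  | succ j ih =>
    rw [← add_assoc, pathPos_succ, ih (by omega), dif_pos (by omega), pathPos_succ,
      dif_pos (by omega), add_assoc]
    exact congrArg (fun s => pathPos ω₁ n + (pathPos ω₂ j + step d s))
      (Fin.append_right ω₁ ω₂ ⟨j, _⟩)

/-- The steps of `ω` in reverse order with flipped signs: `ω` traversed backwards, translated to
start at the origin. -/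
def rev (ω : Fin n → Fin d × Bool) : Fin n → Fin d × Bool :=
  Prod.map id not ∘ ω ∘ Fin.rev

lemma rev_involutive : Function.Involutive (rev : (Fin n → Fin d × Bool) → _) := by
  intro ω
  funext i
  simp [rev, Prod.map]

lemma step_map_not (s : Fin d × Bool) : step d (Prod.map id not s) = -step d s := by
  funext j
  obtain ⟨i, b⟩ := s
  by_cases h : j = i <;> cases b <;> simp [step, h]

lemma pathPos_rev (ω : Fin n → Fin d × Bool) {j : ℕ} (hj : j ≤ n) :
    pathPos (rev ω) j = pathPos ω (n - j) - pathPos ω n := by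
  induction j with
  | zero => simp
  | succ j ih =>
    obtain ⟨k, rfl⟩ : ∃ k, n = k + j + 1 := ⟨n - j - 1, by omega⟩
    rw [pathPos_succ, ih (by omega), dif_pos (by omega), show k + j + 1 - j = k + 1 by omega,
      show k + j + 1 - (j + 1) = k by omega, pathPos_succ, dif_pos (by omega)]
    simp only [rev, Function.comp_apply, step_map_not]
    have : Fin.rev (⟨j, by omega⟩ : Fin (k + j + 1)) = ⟨k, by omega⟩ := by
      ext; simp [Fin.val_rev]
    rw [this]
    abel

lemma abs_pathPos_le (ω : Fin n → Fin d × Bool) (k : ℕ) (j : Fin d) :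
    |pathPos ω k j| ≤ k := by
  induction k with
  | zero => simp
  | succ k ih =>
    have hstep : |(if h : k < n then step d (ω ⟨k, h⟩) else 0) j| ≤ 1 := by
      unfold step; split_ifs <;> simp <;> split_ifs <;> simp
    rw [pathPos_succ, Pi.add_apply, Nat.cast_succ]
    exact (abs_add_le _ _).trans (add_le_add ih hstep)

noncomputable def endBox (d n : ℕ) : Finset (Fin d → ℤ) :=
  Fintype.piFinset fun _ => Icc (-(n : ℤ)) n

lemma pathPos_mem_endBox (ω : Fin n → Fin d × Bool) : pathPos ω n ∈ endBox d n := by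
  simpa only [endBox, Fintype.mem_piFinset, mem_Icc, ← abs_le] using abs_pathPos_le ω n

lemma card_endBox : (endBox d n).card = (2 * n + 1) ^ d := by
  simp only [endBox, Fintype.card_piFinset, Int.card_Icc, prod_const, card_univ,
    Fintype.card_fin]
  congr 1
  omega

end Paths

section OccupationEnergy

variable {V W : Type*} [DecidableEq V] [DecidableEq W] (φ : ℕ → ℝ)

noncomputable def occupationEnergy (T : Finset ℕ) (f : ℕ → V) : ℝ :=
  ∑ x ∈ T.image f, φ #{k ∈ T | f k = x}

lemma energy_eq_occupationEnergy {d n : ℕ} (ω : Fin n → Fin d × Bool) :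
    energy φ ω = occupationEnergy φ (range (n + 1)) (pathPos ω) :=
  rfl

variable {φ}

lemma occupationEnergy_congr {T : Finset ℕ} {f g : ℕ → V} (h : ∀ k ∈ T, f k = g k) :
    occupationEnergy φ T f = occupationEnergy φ T g := by
  unfold occupationEnergy
  rw [image_congr h]
  exact sum_congr rfl fun x _ => by rw [filter_congr fun k hk => by rw [h k hk]]

lemma occupationEnergy_image {T : Finset ℕ} {e : ℕ → ℕ} (he : Set.InjOn e T) {τ : V → W}
    (hτ : Function.Injective τ) {f : ℕ → V} {g : ℕ → W} (h : ∀ k ∈ T, g (e k) = τ (f k)) :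
    occupationEnergy φ (T.image e) g = occupationEnergy φ T f := by
  have himage : (T.image e).image g = (T.image f).image τ := by
    rw [image_image, image_image]
    exact image_congr h
  unfold occupationEnergy
  rw [himage, sum_image fun _ _ _ _ hxy => hτ hxy]
  refine sum_congr rfl fun x _ => congrArg φ ?_
  rw [filter_image, card_image_of_injOn (he.mono (filter_subset _ _))]
  exact congrArg card (filter_congr fun k hk => by simp only [h k hk, hτ.eq_iff])

lemma occupationEnergy_union_le (hφ0 : φ 0 = 0) (hmono : Monotone φ)
    (hsub : ∀ ℓ₁ ℓ₂ : ℕ, φ (ℓ₁ + ℓ₂) ≤ φ ℓ₁ + φ ℓ₂) (T₁ T₂ : Finset ℕ) (f : ℕ → V) :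
    occupationEnergy φ (T₁ ∪ T₂) f ≤ occupationEnergy φ T₁ f + occupationEnergy φ T₂ f := by
  have hextend : ∀ T ⊆ T₁ ∪ T₂,
      occupationEnergy φ T f = ∑ x ∈ (T₁ ∪ T₂).image f, φ #{k ∈ T | f k = x} := by
    refine fun T hT => sum_subset (image_subset_image hT) fun x _ hx => ?_
    rw [card_eq_zero.2 (filter_eq_empty_iff.2 fun k hk hkx => hx (mem_image.2 ⟨k, hk, hkx⟩)), hφ0]
  rw [hextend T₁ subset_union_left, hextend T₂ subset_union_right, hextend _ subset_rfl,
    ← sum_add_distrib]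
  refine sum_le_sum fun x _ => (hmono ?_).trans (hsub _ _)
  rw [filter_union]
  exact card_union_le _ _

end OccupationEnergy

section Energy

variable {d n m : ℕ} {φ : ℕ → ℝ}

lemma energy_append_le (hφ0 : φ 0 = 0) (hmono : Monotone φ)
    (hsub : ∀ ℓ₁ ℓ₂ : ℕ, φ (ℓ₁ + ℓ₂) ≤ φ ℓ₁ + φ ℓ₂)
    (ω₁ : Fin n → Fin d × Bool) (ω₂ : Fin m → Fin d × Bool) :
    energy φ (Fin.append ω₁ ω₂) ≤ energy φ ω₁ + energy φ ω₂ := by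
  have htimes : range (n + m + 1) = range (n + 1) ∪ (range (m + 1)).image (n + ·) := by
    ext k
    simp only [mem_union, mem_range, mem_image]
    constructor
    · intro hk
      by_cases hkn : k < n + 1
      · exact Or.inl hkn
      · exact Or.inr ⟨k - n, by omega, by omega⟩
    · rintro (hk | ⟨j, hj, rfl⟩) <;> omega
  have hleft : occupationEnergy φ (range (n + 1)) (pathPos (Fin.append ω₁ ω₂)) = energy φ ω₁ :=
    occupationEnergy_congr fun k hk =>
      pathPos_append_of_le ω₁ ω₂ (Nat.lt_succ_iff.1 (mem_range.1 hk))
  have hright : occupationEnergy φ ((range (m + 1)).image (n + ·)) (pathPos (Fin.append ω₁ ω₂)) =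
      energy φ ω₂ :=
    occupationEnergy_image (add_right_injective n).injOn (add_right_injective (pathPos ω₁ n))
      fun j hj => pathPos_append_add ω₁ ω₂ (Nat.lt_succ_iff.1 (mem_range.1 hj))
  rw [energy_eq_occupationEnergy, htimes, ← hleft, ← hright]
  exact occupationEnergy_union_le hφ0 hmono hsub _ _ _

lemma energy_rev (ω : Fin n → Fin d × Bool) : energy φ (rev ω) = energy φ ω := by
  have htimes : (range (n + 1)).image (n - ·) = range (n + 1) := by
    ext k
    simp only [mem_image, mem_range]
    exact ⟨fun ⟨j, _, hj⟩ => by omega, fun hk => ⟨n - k, by omega, by omega⟩⟩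
  have hinj : Set.InjOn (n - ·) (range (n + 1) : Set ℕ) := by
    intro a ha b hb hab
    simp only [coe_range, Set.mem_Iio] at ha hb hab
    omega
  rw [energy_eq_occupationEnergy, ← htimes]
  exact occupationEnergy_image hinj (sub_left_injective (b := pathPos ω n)) fun k hk => by
    rw [pathPos_rev ω (by simp at hk; omega), Nat.sub_sub_self (by simp at hk; omega)]

end Energy

def endpoints (d : ℕ) : AddSubmonoid (Fin d → ℤ) where
  carrier := {x | ∃ (m : ℕ) (δ : Fin m → Fin d × Bool), pathPos δ m = x}
  zero_mem' := ⟨0, Fin.elim0, pathPos_zero _⟩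
  add_mem' := fun ⟨m₁, δ₁, h₁⟩ ⟨m₂, δ₂, h₂⟩ =>
    ⟨m₁ + m₂, Fin.append δ₁ δ₂, by rw [pathPos_append_add δ₁ δ₂ le_rfl, h₁, h₂]⟩

lemma step_mem_endpoints {d : ℕ} (s : Fin d × Bool) : step d s ∈ endpoints d :=
  ⟨1, fun _ => s, by simp [pathPos]⟩

lemma mem_endpoints {d : ℕ} (x : Fin d → ℤ) : x ∈ endpoints d := by
  have hsingle : ∀ (j : Fin d) (z : ℤ), Pi.single j z ∈ endpoints d := by
    intro j z
    obtain ⟨k, rfl | rfl⟩ := Int.eq_nat_or_neg z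
    · convert nsmul_mem (step_mem_endpoints (j, true)) k using 1
      funext i
      by_cases h : i = j <;> simp [step, h]
    · convert nsmul_mem (step_mem_endpoints (j, false)) k using 1
      funext i
      by_cases h : i = j <;> simp [step, h]
  rw [← univ_sum_single x]
  exact sum_mem fun j _ => hsingle j (x j)

section TwoPoint

noncomputable def Gterm (d : ℕ) (φ : ℕ → ℝ) (lam : ℝ) (n : ℕ) (y : Fin d → ℤ) : ℝ :=
  ∑ ω : Fin n → Fin d × Bool, if pathPos ω n = y then Real.exp (-(energy φ ω) - lam * n) else 0

variable {d : ℕ} {φ : ℕ → ℝ} {lam : ℝ}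

lemma Gtop_eq_tsum_Gterm (x : Fin d → ℤ) :
    Gtop d φ lam x = ∑' n, ENNReal.ofReal (Gterm d φ lam n x) := by
  refine tsum_congr fun n => ?_
  rw [Gterm, ENNReal.ofReal_sum_of_nonneg fun ω _ => by split_ifs <;> positivity]
  exact sum_congr rfl fun ω _ => by split_ifs <;> simp

lemma Gtop_eq_top_of_tendsto {x : Fin d → ℤ} {k : ℕ → ℕ}
    (h : Tendsto (fun n => Gterm d φ lam (k n) x) atTop atTop) : Gtop d φ lam x = ⊤ := by
  rw [Gtop_eq_tsum_Gterm]
  refine ENNReal.eq_top_of_forall_nnreal_le fun r => ?_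
  obtain ⟨n, hn⟩ := (h.eventually_ge_atTop r).exists
  calc (r : ℝ≥0∞) = ENNReal.ofReal r := ENNReal.ofReal_coe_nnreal.symm
    _ ≤ ENNReal.ofReal (Gterm d φ lam (k n) x) := ENNReal.ofReal_le_ofReal hn
    _ ≤ _ := ENNReal.le_tsum (k n)

lemma exists_Gterm_pos (x : Fin d → ℤ) : ∃ m, 0 < Gterm d φ lam m x := by
  obtain ⟨m, δ, hδ⟩ := mem_endpoints x
  exact ⟨m, sum_pos' (fun ω _ => by split_ifs <;> positivity)
    ⟨δ, mem_univ _, by rw [if_pos hδ]; positivity⟩⟩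

lemma sum_Gterm_endBox (n : ℕ) :
    ∑ y ∈ endBox d n, Gterm d φ lam n y = Real.exp (-(lam * n)) * Zpart d φ n := by
  simp only [Gterm, Zpart]
  rw [sum_comm, mul_sum]
  refine sum_congr rfl fun ω _ => ?_
  rw [sum_ite_eq, if_pos (pathPos_mem_endBox ω), ← Real.exp_add]
  ring_nf

lemma exists_le_Gterm (n : ℕ) :
    ∃ y, Real.exp (-(lam * n)) * Zpart d φ n / (2 * n + 1) ^ d ≤ Gterm d φ lam n y := by
  have hbox : ∑ _y ∈ endBox d n, Real.exp (-(lam * n)) * Zpart d φ n / (2 * n + 1) ^ d =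
      ∑ y ∈ endBox d n, Gterm d φ lam n y := by
    rw [sum_const, card_endBox, sum_Gterm_endBox, nsmul_eq_mul]
    push_cast
    field_simp
  obtain ⟨y, -, hy⟩ := exists_le_of_sum_le ⟨0, by simp [endBox]⟩ hbox.le
  exact ⟨y, hy⟩

lemma Gterm_mul_le (hφ0 : φ 0 = 0) (hmono : Monotone φ)
    (hsub : ∀ ℓ₁ ℓ₂ : ℕ, φ (ℓ₁ + ℓ₂) ≤ φ ℓ₁ + φ ℓ₂) (n m : ℕ) (x y : Fin d → ℤ) :
    Gterm d φ lam n x * Gterm d φ lam m y ≤ Gterm d φ lam (n + m) (x + y) := by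
  rw [Gterm, Gterm, sum_mul_sum, ← Fintype.sum_prod_type', Gterm,
    ← (Fin.appendEquiv n m).sum_comp]
  refine sum_le_sum fun p _ => ?_
  obtain ⟨ω₁, ω₂⟩ := p
  simp only [Fin.appendEquiv, Equiv.coe_fn_mk]
  by_cases h : pathPos ω₁ n = x ∧ pathPos ω₂ m = y
  · have hend : pathPos (Fin.append ω₁ ω₂) (n + m) = x + y := by
      rw [pathPos_append_add ω₁ ω₂ le_rfl, h.1, h.2]
    have := energy_append_le hφ0 hmono hsub ω₁ ω₂
    simp only [h.1, h.2, hend, if_true, ← Real.exp_add]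
    gcongr
    push_cast
    linarith
  · rcases not_and_or.1 h with h | h <;> simp only [h, if_false, zero_mul, mul_zero] <;>
      split_ifs <;> positivity

lemma Gterm_neg (n : ℕ) (y : Fin d → ℤ) : Gterm d φ lam n (-y) = Gterm d φ lam n y := by
  refine (Fintype.sum_equiv (rev_involutive.toPerm _) _ _ fun ω => ?_).symm
  simp [energy_rev, pathPos_rev ω le_rfl]

end TwoPoint

section Asymptotics

variable {d : ℕ} {φ : ℕ → ℝ}

lemma Zpart_pos (hd : 0 < d) (n : ℕ) : 0 < Zpart d φ n :=
  have : Nonempty (Fin n → Fin d × Bool) := ⟨fun _ => (⟨0, hd⟩, true)⟩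
  sum_pos (fun _ _ => Real.exp_pos _) univ_nonempty

lemma tendsto_exp_mul_div_pow (d : ℕ) {ε : ℝ} (hε : 0 < ε) :
    Tendsto (fun n : ℕ => Real.exp (ε * n) / (2 * n + 1) ^ d) atTop atTop := by
  have hεn : Tendsto (fun n : ℕ => ε * n) atTop atTop :=
    tendsto_natCast_atTop_atTop.const_mul_atTop hε
  refine tendsto_atTop_mono' atTop ?_ (((Real.tendsto_exp_div_pow_atTop d).comp hεn).const_mul_atTop
    (pow_pos (by positivity : 0 < ε / 3) d))
  filter_upwards [eventually_ge_atTop 1] with n hn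
  have hn1 : (1 : ℝ) ≤ n := by exact_mod_cast hn
  -- `(2n + 1)^d ≤ (3n)^d = (3/ε)^d (εn)^d`
  calc (ε / 3) ^ d * (Real.exp (ε * n) / (ε * n) ^ d) = Real.exp (ε * n) / (3 * n) ^ d := by
        rw [div_pow, mul_pow, mul_pow]
        field_simp
    _ ≤ Real.exp (ε * n) / (2 * n + 1) ^ d := by gcongr; linarith

lemma eventually_exp_le_mul_Zpart (hd : 0 < d) {lam0 : ℝ}
    (hlam0 : Tendsto (fun n : ℕ => Real.log (Zpart d φ n) / (n : ℝ)) atTop (nhds lam0))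
    {lam ε : ℝ} (hlam : lam + ε < lam0) :
    ∀ᶠ n : ℕ in atTop, Real.exp (ε * n) ≤ Real.exp (-(lam * n)) * Zpart d φ n := by
  filter_upwards [hlam0.eventually (eventually_gt_nhds hlam), eventually_gt_atTop 0] with n hlog hn
  have hlog' : (lam + ε) * n < Real.log (Zpart d φ n) := (lt_div_iff₀ (by exact_mod_cast hn)).1 hlog
  rw [← Real.exp_log (Zpart_pos hd n), ← Real.exp_add]
  exact Real.exp_le_exp.2 (by linarith)

lemma tendsto_Gterm_loop (hd : 0 < d) (hφ0 : φ 0 = 0) (hmono : Monotone φ)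
    (hsub : ∀ ℓ₁ ℓ₂ : ℕ, φ (ℓ₁ + ℓ₂) ≤ φ ℓ₁ + φ ℓ₂) {lam0 : ℝ}
    (hlam0 : Tendsto (fun n : ℕ => Real.log (Zpart d φ n) / (n : ℝ)) atTop (nhds lam0))
    {lam : ℝ} (hlam : lam < lam0) :
    Tendsto (fun n => Gterm d φ lam (n + n) 0) atTop atTop := by
  have hε : 0 < (lam0 - lam) / 2 := by linarith
  refine tendsto_atTop_mono' atTop ?_
    ((tendsto_pow_atTop two_ne_zero).comp (tendsto_exp_mul_div_pow d hε))
  filter_upwards [eventually_exp_le_mul_Zpart hd hlam0 (lam := lam) (ε := (lam0 - lam) / 2)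
    (by linarith)] with n hn
  obtain ⟨y, hy⟩ := exists_le_Gterm (φ := φ) (lam := lam) n
  calc (Real.exp ((lam0 - lam) / 2 * n) / (2 * n + 1) ^ d) ^ 2 ≤ Gterm d φ lam n y ^ 2 := by
        gcongr
        exact (div_le_div_of_nonneg_right hn (by positivity)).trans hy
    _ = Gterm d φ lam n y * Gterm d φ lam n (-y) := by rw [Gterm_neg, sq]
    _ ≤ Gterm d φ lam (n + n) 0 := by
        simpa using Gterm_mul_le hφ0 hmono hsub n n y (-y)

end Asymptotics

/-- For an attractive potential and `λ < λ₀`, the two-point function diverges at the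
origin, `G_λ(0) = ∞`, and consequently `G_λ(x) = ∞` for every `x ∈ ℤ^d`. -/
theorem two_point_diverges_below_critical (d : ℕ) (hd : 0 < d) (φ : ℕ → ℝ)
    (hφ0 : φ 0 = 0) (hmono : Monotone φ)
    (hsub : ∀ ℓ₁ ℓ₂ : ℕ, φ (ℓ₁ + ℓ₂) ≤ φ ℓ₁ + φ ℓ₂) (lam0 : ℝ)
    (hlam0 : Tendsto (fun n : ℕ => Real.log (Zpart d φ n) / (n : ℝ)) atTop (nhds lam0))
    (lam : ℝ) (hlam : lam < lam0) :
    Gtop d φ lam 0 = ⊤ ∧ ∀ x : Fin d → ℤ, Gtop d φ lam x = ⊤ := by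
  have hloop := tendsto_Gterm_loop hd hφ0 hmono hsub hlam0 hlam
  have hdiverge : ∀ x, Gtop d φ lam x = ⊤ := by
    intro x
    obtain ⟨m, hm⟩ := exists_Gterm_pos (φ := φ) (lam := lam) x
    refine Gtop_eq_top_of_tendsto (k := fun n => n + n + m)
      (tendsto_atTop_mono (fun n => ?_) (hloop.atTop_mul_const hm))
    simpa using Gterm_mul_le hφ0 hmono hsub (n + n) m 0 x
  exact ⟨hdiverge 0, hdiverge⟩
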